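/- For all l, i, j ∈ {1,…,p−1} with i ≤ j and l < j the following identity holds in R: X_l·φ(i,j) − X_j·φ(i,l) + X_{τ(i,j)}·φ(i+j−τ(i,j), l) − X_{τ(i,l)}·φ(i+l−τ(i,l), j) = 0. In particular, this is an R-linear syzygy among the binomials φ(i,j). -/

import Mathlib

/-!
Write `m(s) = X_{min(s,p)} X_{s - min(s,p)}` (`stdMonomial₂`), a monomial depending only on the
weight `s`. For all `a, b < p`, including `a = 0` or `b = 0` where both sides vanish,
`φ(a,b) = X_a X_b - m(a+b)`; moreover `X_{τ(a,b)} X_{a+b-τ(a,b)} = m(a+b)`, and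
`X_{τ(a,b)} m(a+b-τ(a,b)+c)` depends only on `a+b+c` (`stdMonomial₃`). Expanding the syzygy, the
quadratic parts cancel pairwise and the two remaining cubic terms both have weight `i+j+l`.
-/

open MvPolynomial
open Fin.NatCast

/-- `ε(i,j) = i + j` if `i + j < p`, and `ε(i,j) = p` if `i + j ≥ p`. -/
def eps (p i j : ℕ) : ℕ := if i + j < p then i + j else p

/-- `τ(i,j) = 0` if `i + j < p`, and `τ(i,j) = p` if `i + j ≥ p`. -/
def tau (p i j : ℕ) : ℕ := if i + j < p then 0 else p

/-- The binomial `φ(i,j) = X_i·X_j − X_{ε(i,j)}·X_{i+j−ε(i,j)}` for `i, j ∈ {1,…,p−1}`,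
with the convention `φ(i,j) = 0` whenever `i ∉ {1,…,p−1}` or `j ∉ {1,…,p−1}`.
(The symmetry convention `φ(i,j) = φ(j,i)` holds automatically for this formula.) -/
noncomputable def phiC (K : Type*) [Field K] (p i j : ℕ) : MvPolynomial (Fin (p + 1)) K :=
  if 1 ≤ i ∧ i < p ∧ 1 ≤ j ∧ j < p then
    X ((i : ℕ) : Fin (p + 1)) * X ((j : ℕ) : Fin (p + 1)) -
      X ((eps p i j : ℕ) : Fin (p + 1)) * X ((i + j - eps p i j : ℕ) : Fin (p + 1))
  else 0

section StdMonomial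

variable (K : Type*) [CommSemiring K] (p : ℕ)

noncomputable def stdMonomial₂ (s : ℕ) : MvPolynomial (Fin (p + 1)) K :=
  X ((min s p : ℕ) : Fin (p + 1)) * X ((s - min s p : ℕ) : Fin (p + 1))

noncomputable def stdMonomial₃ (s : ℕ) : MvPolynomial (Fin (p + 1)) K :=
  if s < p then X ((0 : ℕ) : Fin (p + 1)) * stdMonomial₂ K p s
  else X ((p : ℕ) : Fin (p + 1)) * stdMonomial₂ K p (s - p)

variable {K p}

lemma stdMonomial₂_of_lt {s : ℕ} (hs : s < p) :
    stdMonomial₂ K p s = X ((s : ℕ) : Fin (p + 1)) * X ((0 : ℕ) : Fin (p + 1)) := by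
  rw [stdMonomial₂, min_eq_left hs.le, Nat.sub_self]

lemma stdMonomial₂_of_le {s : ℕ} (hs : p ≤ s) :
    stdMonomial₂ K p s = X ((p : ℕ) : Fin (p + 1)) * X ((s - p : ℕ) : Fin (p + 1)) := by
  rw [stdMonomial₂, min_eq_right hs]

lemma X_tau_mul_X (i j : ℕ) :
    X ((tau p i j : ℕ) : Fin (p + 1)) * X ((i + j - tau p i j : ℕ) : Fin (p + 1)) =
      stdMonomial₂ K p (i + j) := by
  unfold tau
  split_ifs with h
  · rw [stdMonomial₂_of_lt h, Nat.sub_zero, mul_comm]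
  · rw [stdMonomial₂_of_le (not_lt.mp h)]

lemma X_zero_mul_stdMonomial₂ {s : ℕ} (hps : p ≤ s) (hs : s < 2 * p) :
    X ((0 : ℕ) : Fin (p + 1)) * stdMonomial₂ K p s =
      X ((p : ℕ) : Fin (p + 1)) * stdMonomial₂ K p (s - p) := by
  rw [stdMonomial₂_of_le hps, stdMonomial₂_of_lt (by omega)]
  ring

lemma X_tau_mul_stdMonomial₂ (a b : ℕ) {c : ℕ} (hc : c < p) :
    X ((tau p a b : ℕ) : Fin (p + 1)) * stdMonomial₂ K p (a + b - tau p a b + c) =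
      stdMonomial₃ K p (a + b + c) := by
  unfold tau stdMonomial₃
  by_cases hab : a + b < p
  · rw [if_pos hab, Nat.sub_zero]
    split_ifs with hs
    · rfl
    · exact X_zero_mul_stdMonomial₂ (not_lt.mp hs) (by omega)
  · rw [if_neg hab, if_neg (by omega), Nat.sub_add_comm (not_lt.mp hab)]

end StdMonomial

lemma eps_eq_min (p i j : ℕ) : eps p i j = min (i + j) p := by
  unfold eps
  split_ifs <;> omega

lemma add_sub_tau_lt {p i j : ℕ} (hi : i < p) (hj : j < p) : i + j - tau p i j < p := by
  unfold tau
  split_ifs <;> omega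

lemma phiC_eq_sub (K : Type*) [Field K] {p a b : ℕ} (ha : a < p) (hb : b < p) :
    phiC K p a b =
      X ((a : ℕ) : Fin (p + 1)) * X ((b : ℕ) : Fin (p + 1)) - stdMonomial₂ K p (a + b) := by
  rw [phiC, eps_eq_min, ← stdMonomial₂]
  split_ifs with h
  · rfl
  · obtain rfl | rfl : a = 0 ∨ b = 0 := by omega
    · rw [zero_add, stdMonomial₂_of_lt hb, mul_comm, sub_self]
    · rw [add_zero, stdMonomial₂_of_lt ha, sub_self]

theorem syzygy_L_general
    (K : Type*) [Field K] (p : ℕ) :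
    ∀ l i j : ℕ, 1 ≤ l → l < p → 1 ≤ i → i < p → 1 ≤ j → j < p → i ≤ j → l < j →
      X ((l : ℕ) : Fin (p + 1)) * phiC K p i j -
        X ((j : ℕ) : Fin (p + 1)) * phiC K p i l +
        X ((tau p i j : ℕ) : Fin (p + 1)) * phiC K p (i + j - tau p i j) l -
        X ((tau p i l : ℕ) : Fin (p + 1)) * phiC K p (i + l - tau p i l) j = 0 := by
  intro l i j _ hl _ hi _ hj _ _
  rw [phiC_eq_sub K hi hj, phiC_eq_sub K hi hl, phiC_eq_sub K (add_sub_tau_lt hi hj) hl,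
    phiC_eq_sub K (add_sub_tau_lt hi hl) hj]
  have hij : X ((tau p i j : ℕ) : Fin (p + 1)) * stdMonomial₂ K p (i + j - tau p i j + l) =
      stdMonomial₃ K p (i + j + l) := X_tau_mul_stdMonomial₂ i j hl
  have hil : X ((tau p i l : ℕ) : Fin (p + 1)) * stdMonomial₂ K p (i + l - tau p i l + j) =
      stdMonomial₃ K p (i + j + l) := by
    rw [X_tau_mul_stdMonomial₂ i l hj, add_right_comm]
  linear_combination X ((l : ℕ) : Fin (p + 1)) * X_tau_mul_X (K := K) i j -
    X ((j : ℕ) : Fin (p + 1)) * X_tau_mul_X (K := K) i l - hij + hil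

/-- For `l, i, j ∈ {1,…,p−1}` with `i ≤ j` and `l < j`, the syzygy
`X_l·φ(i,j) − X_j·φ(i,l) + X_{τ(i,j)}·φ(i+j−τ(i,j), l) − X_{τ(i,l)}·φ(i+l−τ(i,l), j) = 0`
holds in `R`. -/
theorem syzygy_L
    (K : Type*) [Field K] (p : ℕ) (hp : 2 ≤ p) :
    ∀ l i j : ℕ, 1 ≤ l → l < p → 1 ≤ i → i < p → 1 ≤ j → j < p → i ≤ j → l < j →
      X ((l : ℕ) : Fin (p + 1)) * phiC K p i j -
        X ((j : ℕ) : Fin (p + 1)) * phiC K p i l +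
        X ((tau p i j : ℕ) : Fin (p + 1)) * phiC K p (i + j - tau p i j) l -
        X ((tau p i l : ℕ) : Fin (p + 1)) * phiC K p (i + l - tau p i l) j = 0 :=
  syzygy_L_general K p
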